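/- arXiv:math/9807158 — 2 statements merged into one kernel-verified Lean document; each statement's English description precedes it below -/
import Mathlib

section
/- In an associative algebra, if elements b₁, b₂ satisfy the Hecke relations b_i² = (1−q)b_i + q and the braid relation b₁b₂b₁ = b₂b₁b₂, then the element C₃ := b₁ + b₂ + q⁻¹·b₁b₂b₁ commutes with both b₁ and b₂ (it is central in the subalgebra they generate). -/
/-- If `b₁, b₂` satisfy the Hecke relations `bᵢ² = (1−q)bᵢ + q·1` and the braid relation
`b₁b₂b₁ = b₂b₁b₂`, then `C₃ := b₁ + b₂ + q⁻¹·b₁b₂b₁` commutes with both `b₁` and `b₂`. -/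
theorem hecke_class_sum_central {K A : Type*} [Field K] [Ring A] [Algebra K A]
    (q : K) (b₁ b₂ : A) (hq : q ≠ 0)
    (hb₁ : b₁ * b₁ = (1 - q) • b₁ + algebraMap K A q)
    (hb₂ : b₂ * b₂ = (1 - q) • b₂ + algebraMap K A q)
    (hbraid : b₁ * b₂ * b₁ = b₂ * b₁ * b₂) :
    Commute (b₁ + b₂ + q⁻¹ • (b₁ * b₂ * b₁)) b₁ ∧
    Commute (b₁ + b₂ + q⁻¹ • (b₁ * b₂ * b₁)) b₂ := by
  rw [Algebra.algebraMap_eq_smul_one] at hb₁ hb₂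
  have e1 : b₁ * (b₁ * b₂ * b₁) = (1 - q) • (b₁ * b₂ * b₁) + q • (b₂ * b₁) := by
    have h : b₁ * (b₁ * b₂ * b₁) = (b₁ * b₁) * (b₂ * b₁) := by noncomm_ring
    rw [h, hb₁, add_mul, smul_mul_assoc, smul_mul_assoc, one_mul, mul_assoc]
  have e2 : (b₁ * b₂ * b₁) * b₁ = (1 - q) • (b₁ * b₂ * b₁) + q • (b₁ * b₂) := by
    have h : (b₁ * b₂ * b₁) * b₁ = (b₁ * b₂) * (b₁ * b₁) := by noncomm_ring
    rw [h, hb₁, mul_add, mul_smul_comm, mul_smul_comm, mul_one]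
  have e3 : b₂ * (b₁ * b₂ * b₁) = (1 - q) • (b₁ * b₂ * b₁) + q • (b₁ * b₂) := by
    have h : b₂ * (b₁ * b₂ * b₁) = (b₂ * b₂) * (b₁ * b₂) := by
      rw [hbraid]; noncomm_ring
    rw [h, hb₂, add_mul, smul_mul_assoc, smul_mul_assoc, one_mul, ← mul_assoc, ← hbraid]
  have e4 : (b₁ * b₂ * b₁) * b₂ = (1 - q) • (b₁ * b₂ * b₁) + q • (b₂ * b₁) := by
    have h : (b₁ * b₂ * b₁) * b₂ = (b₂ * b₁) * (b₂ * b₂) := by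
      rw [hbraid]; noncomm_ring
    rw [h, hb₂, mul_add, mul_smul_comm, mul_smul_comm, mul_one, ← hbraid]
  have hqq : ∀ x : A, q⁻¹ • (q • x) = x := fun x => by
    rw [smul_smul, inv_mul_cancel₀ hq, one_smul]
  constructor
  · show _ = _
    rw [add_mul, add_mul, mul_add, mul_add, smul_mul_assoc, mul_smul_comm, e1, e2,
      smul_add, smul_add, hqq, hqq]
    abel
  · show _ = _
    rw [add_mul, add_mul, mul_add, mul_add, smul_mul_assoc, mul_smul_comm, e3, e4,
      smul_add, smul_add, hqq, hqq]
    abel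
end

section
/- In the Clifford algebra Cl(V, B) realized on the exterior algebra of a 4-dimensional space with basis e₁,…,e₄ and bilinear form B with matrix entries B(e_i, e_{j}) given by B(e₁,e₃)=q, B(e₂,e₄)=q, B(e₃,e₁)=1, B(e₄,e₂)=1, B(e₂,e₃)=λ, B(e₃,e₂)=q/λ (all others zero), the bivector b₁ = e₁∧e₃ satisfies the quadratic Hecke relation b₁² = (1−q)·b₁ + q·1 under the Clifford product. -/
/-- In the Clifford algebra realization (Chevalley construction) of `Cl(V,B)` for
`V = K⁴` and the bilinear form `B` with `B(e₁,e₃)=B(e₂,e₄)=q`, `B(e₃,e₁)=B(e₄,e₂)=1`,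
`B(e₂,e₃)=λ`, `B(e₃,e₂)=q/λ` and all other entries zero, the bivector
`b₁ = e₁∧e₃ = e₁·e₃ − B(e₁,e₃)·1` satisfies the Hecke relation `b₁² = (1−q)·b₁ + q·1`. -/
theorem bivector_hecke_relation {K : Type*} [Field K] (q lam : K) (hlam : lam ≠ 0) :
    let M : Matrix (Fin 4) (Fin 4) K :=
      !![0, 0, q, 0; 0, 0, lam, q; 1, q / lam, 0, 0; 0, 1, 0, 0]
    let Q : QuadraticForm K (Fin 4 → K) := (Matrix.toBilin' M).toQuadraticMap
    let e : Fin 4 → CliffordAlgebra Q := fun i => CliffordAlgebra.ι Q (Pi.single i 1)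
    let b₁ : CliffordAlgebra Q := e 0 * e 2 - algebraMap K _ q
    b₁ * b₁ = (1 - q) • b₁ + algebraMap K _ q := by
  intro M Q e b₁
  have hQ0 : Q (Pi.single 0 1) = 0 := by
    simp [Q, M, LinearMap.BilinMap.toQuadraticMap_apply, Matrix.toBilin'_apply,
      Pi.single_apply, Fin.sum_univ_four]
  have hQ2 : Q (Pi.single 2 1) = 0 := by
    simp [Q, M, LinearMap.BilinMap.toQuadraticMap_apply, Matrix.toBilin'_apply,
      Pi.single_apply, Fin.sum_univ_four]
  have hpolar : QuadraticMap.polar Q (Pi.single 0 1) (Pi.single 2 1) = q + 1 := by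
    simp only [QuadraticMap.polar, Q, M, LinearMap.BilinMap.toQuadraticMap_apply,
      Matrix.toBilin'_apply]
    simp [Pi.single_apply, Fin.sum_univ_four]
  have h02 : e 2 * e 0 = algebraMap K _ (q + 1) - e 0 * e 2 := by
    have h := CliffordAlgebra.ι_mul_ι_add_swap (Q := Q) (Pi.single 0 1) (Pi.single 2 1)
    rw [hpolar] at h
    show CliffordAlgebra.ι Q (Pi.single 2 1) * CliffordAlgebra.ι Q (Pi.single 0 1) = _
    rw [eq_sub_iff_add_eq, add_comm]
    exact h
  have h0 : e 0 * e 0 = 0 := by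
    have h := CliffordAlgebra.ι_sq_scalar Q (Pi.single 0 1)
    rw [hQ0, map_zero] at h
    exact h
  have h2 : e 2 * e 2 = 0 := by
    have h := CliffordAlgebra.ι_sq_scalar Q (Pi.single 2 1)
    rw [hQ2, map_zero] at h
    exact h
  have key : (e 0 * e 2) * (e 0 * e 2) = (q + 1) • (e 0 * e 2) := by
    calc (e 0 * e 2) * (e 0 * e 2) = e 0 * (e 2 * e 0) * e 2 := by
          rw [mul_assoc, mul_assoc, mul_assoc]
    _ = e 0 * (algebraMap K _ (q + 1) - e 0 * e 2) * e 2 := by rw [h02]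
    _ = (q + 1) • (e 0 * e 2) - e 0 * ((e 0 * e 2) * e 2) := by
        rw [mul_sub, sub_mul, Algebra.smul_def, ← Algebra.commutes (q+1) (e 0),
          mul_assoc, mul_assoc]
    _ = (q + 1) • (e 0 * e 2) := by rw [mul_assoc, h2, mul_zero, mul_zero, sub_zero]
  show (e 0 * e 2 - algebraMap K _ q) * (e 0 * e 2 - algebraMap K _ q)
      = (1 - q) • (e 0 * e 2 - algebraMap K _ q) + algebraMap K _ q
  have halg : ∀ c : K, algebraMap K (CliffordAlgebra Q) c = c • 1 :=
    fun c => (Algebra.algebraMap_eq_smul_one c)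
  rw [halg, sub_mul, mul_sub, mul_sub, key]
  simp only [smul_mul_assoc, mul_smul_comm, one_mul, mul_one, smul_smul]
  module
end
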